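/- Boundary identity for tangential fields: let Ω be locally the region above a graph z = φ(y) with outward normal n and tangential frame ∂_{y¹}, ∂_{y²}. For any C¹ vector field u on Ω, ∂_n u · n = div u − (Π∂_{y¹}u)¹ − (Π∂_{y²}u)², where Π = Id − n⊗n and (Π∂_{y^k} u)^k denotes the k-th component of the tangential projection of the derivative of u along the tangential direction y^k. -/
import Mathlib


open MeasureTheory

/-- Partial derivative in the `i`-th coordinate direction in `ℝ³`. -/
noncomputable def pd (i : Fin 3) (f : (Fin 3 → ℝ) → ℝ) (x : Fin 3 → ℝ) : ℝ :=
  fderiv ℝ f x (Pi.single i 1)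

/-- Partial derivative in the `i`-th coordinate direction in `ℝ²`. -/
noncomputable def pd2 (i : Fin 2) (f : (Fin 2 → ℝ) → ℝ) (y : Fin 2 → ℝ) : ℝ :=
  fderiv ℝ f y (Pi.single i 1)

/-- Euclidean dot product on `ℝ³`. -/
def dot3 (a b : Fin 3 → ℝ) : ℝ := ∑ i, a i * b i

/-- Divergence of a vector field on `ℝ³`. -/
noncomputable def vdiv (u : (Fin 3 → ℝ) → (Fin 3 → ℝ)) (x : Fin 3 → ℝ) : ℝ :=
  ∑ i, pd i (fun w => u w i) x

/-- The gradient matrix `(∇u)_{ij} = ∂_j u_i`. -/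
noncomputable def gradm (u : (Fin 3 → ℝ) → (Fin 3 → ℝ)) (x : Fin 3 → ℝ)
    (i j : Fin 3) : ℝ :=
  pd j (fun w => u w i) x

/-- `Π v = v - (v·n) n`. -/
def proj (n v : Fin 3 → ℝ) : Fin 3 → ℝ := v - dot3 v n • n

/-- The unit normal `n = N/|N|` with `N = (∂₁φ, ∂₂φ, −1)`, extended inside the domain. -/
noncomputable def nvec (φ : (Fin 2 → ℝ) → ℝ) (x : Fin 3 → ℝ) : Fin 3 → ℝ :=
  (Real.sqrt ((pd2 0 φ ![x 0, x 1]) ^ 2 + (pd2 1 φ ![x 0, x 1]) ^ 2 + 1))⁻¹ •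
    ![pd2 0 φ ![x 0, x 1], pd2 1 φ ![x 0, x 1], (-1 : ℝ)]

/-- Boundary identity for tangential fields: in the graph parametrization of
`Ω = {z > φ(y)}`, with `n = N/|N|`, `∂_{y^k} = ∂_k + ∂_kφ ∂₃` and `Π = Id − n⊗n`,
one has `∂_n u · n = div u − (Π∂_{y¹}u)¹ − (Π∂_{y²}u)²` for any `C¹` vector field `u`. -/
theorem stmt16 (φ : (Fin 2 → ℝ) → ℝ) (hφ : Differentiable ℝ φ)
    (u : (Fin 3 → ℝ) → (Fin 3 → ℝ)) (x : Fin 3 → ℝ)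
    (hx : φ ![x 0, x 1] < x 2) (hu : DifferentiableAt ℝ u x) :
    dot3 (fun i => ∑ j, gradm u x i j * nvec φ x j) (nvec φ x)
      = vdiv u x
        - proj (nvec φ x)
            (fun i => gradm u x i 0 + pd2 0 φ ![x 0, x 1] * gradm u x i 2) 0
        - proj (nvec φ x)
            (fun i => gradm u x i 1 + pd2 1 φ ![x 0, x 1] * gradm u x i 2) 1 := by
  simp only [dot3, vdiv, gradm, proj, nvec, Pi.sub_apply, Pi.smul_apply, smul_eq_mul,
    Fin.sum_univ_three, Matrix.cons_val_zero, Matrix.cons_val_one, Matrix.head_cons,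
    Matrix.cons_val_two, Matrix.tail_cons]
  set a := pd2 0 φ ![x 0, x 1] with ha
  set b := pd2 1 φ ![x 0, x 1] with hb
  have h : (0:ℝ) < a ^ 2 + b ^ 2 + 1 := by positivity
  set s := Real.sqrt (a ^ 2 + b ^ 2 + 1) with hs
  have hs2 : s ^ 2 = a ^ 2 + b ^ 2 + 1 := Real.sq_sqrt h.le
  have hspos : (0:ℝ) < s := Real.sqrt_pos.mpr h
  field_simp
  linear_combination (a * pd 2 (fun w => u w 0) x + b * pd 2 (fun w => u w 1) x
    - pd 2 (fun w => u w 2) x) * hs2
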